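/- For all positive integers n, m and real q with 0 < q < 1: ∑_{k=1}^n q^k/[k]_q^m = ∑_{n ≥ k_1 ≥ ⋯ ≥ k_m ≥ 1} (-1)^{k_1+1} q^{k_1(k_1+1)/2} C_q(n,k_1) ∏_{j=1}^m 1/[k_j]_q. -/

import Mathlib

/-- Gaussian binomial coefficient, vanishing unless `k ≤ n`. -/
noncomputable def qbinom (q : ℝ) (n k : ℕ) : ℝ :=
  if k ≤ n then ∏ j ∈ Finset.Icc 1 k, (1 - q ^ (n - k + j)) / (1 - q ^ j) else 0

/-- The `q`-analog of a natural number: `[k]_q = (1-q^k)/(1-q)`. -/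
noncomputable def qnum (q : ℝ) (k : ℕ) : ℝ := (1 - q ^ k) / (1 - q)

/-- `∑_{n ≥ k₁ ≥ ⋯ ≥ k_m ≥ 1} ∏_j 1/[k_j]_q`. -/
noncomputable def nestedInvQ (q : ℝ) : ℕ → ℕ → ℝ
  | _, 0 => 1
  | n, m + 1 => ∑ k ∈ Finset.Icc 1 n, (1 / qnum q k) * nestedInvQ q k m

/-! Let `D_n` be the right-hand side (`qKarlDualSum`) and `S_r(k) = nestedInvQ q k r`.
The `q`-Pascal rule `C(n+1,k) = C(n,k) + q^(n+1-k) C(n,k-1)` and the absorption identity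
`C(n,k-1) / [k] = C(n+1,k) / [n+1]` give
`D_(n+1) - D_n = q^(n+1) / [n+1] * ∑_k (-1)^(k+1) q^(k(k-1)/2) C(n+1,k) S_(m-1)(k)`,
so `D_n` telescopes to the left-hand side once this alternating sum is shown to be
`1 / [n+1]^(m-1)`. That is an induction on `m`: unfolding `S_r(k) = ∑_(j ≤ k) S_(r-1)(j) / [j]`
and exchanging the sums, the partial alternating sums `∑_(k ≥ j) (-1)^(k+1) q^(k(k-1)/2) C(N,k)`
collapse to `(-1)^(j+1) q^(j(j-1)/2) C(N-1,j-1)` by the other `q`-Pascal rule, and absorption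
then pulls out one factor `1 / [N]`. -/

open Finset

noncomputable def qPochhammer (q : ℝ) (n : ℕ) : ℝ := ∏ j ∈ Icc 1 n, (1 - q ^ j)

section

variable {q : ℝ}

lemma one_sub_pow_ne_zero (hq : ¬IsOfFinOrder q) {j : ℕ} (hj : j ≠ 0) : 1 - q ^ j ≠ 0 :=
  fun h => hq <| isOfFinOrder_iff_pow_eq_one.2 ⟨j, Nat.pos_of_ne_zero hj, by linarith⟩

lemma qPochhammer_succ (q : ℝ) (n : ℕ) :
    qPochhammer q (n + 1) = qPochhammer q n * (1 - q ^ (n + 1)) :=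
  prod_Icc_succ_top (by omega) _

lemma qPochhammer_ne_zero (hq : ¬IsOfFinOrder q) (n : ℕ) : qPochhammer q n ≠ 0 :=
  prod_ne_zero_iff.2 fun j hj => one_sub_pow_ne_zero hq (by simp at hj; omega)

lemma qPochhammer_add (q : ℝ) (a b : ℕ) :
    qPochhammer q (a + b) = qPochhammer q a * ∏ j ∈ Icc 1 b, (1 - q ^ (a + j)) := by
  induction b with
  | zero => simp
  | succ b ih =>
    rw [← add_assoc, qPochhammer_succ, ih, prod_Icc_succ_top (by omega), mul_assoc, add_assoc]

lemma qbinom_add_left (hq : ¬IsOfFinOrder q) (k d : ℕ) :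
    qbinom q (k + d) k = qPochhammer q (k + d) / (qPochhammer q k * qPochhammer q d) := by
  rw [qbinom, if_pos (by omega), prod_div_distrib, Nat.add_sub_cancel_left, add_comm k d,
    qPochhammer_add q d k]
  have := qPochhammer_ne_zero hq d
  field_simp
  rfl

lemma qbinom_of_lt {n k : ℕ} (h : n < k) : qbinom q n k = 0 := if_neg (by omega)

lemma qbinom_zero_right (q : ℝ) (n : ℕ) : qbinom q n 0 = 1 := by simp [qbinom]

lemma qbinom_succ_succ (q : ℝ) (n k : ℕ) :
    qbinom q (n + 1) (k + 1) = (1 - q ^ (n + 1)) / (1 - q ^ (k + 1)) * qbinom q n k := by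
  by_cases hk : k ≤ n
  · rw [qbinom, qbinom, if_pos (by omega), if_pos hk, prod_Icc_succ_top (by omega),
      show n + 1 - (k + 1) + (k + 1) = n + 1 by omega, Nat.add_sub_add_right, mul_comm]
  · rw [qbinom_of_lt (by omega), qbinom_of_lt (by omega), mul_zero]

lemma one_sub_pow_mul_qbinom_succ_right (hq : ¬IsOfFinOrder q) (n k : ℕ) :
    (1 - q ^ (k + 1)) * qbinom q n (k + 1) = (1 - q ^ (n - k)) * qbinom q n k := by
  rcases lt_trichotomy k n with hk | rfl | hk
  · obtain ⟨d, rfl⟩ : ∃ d, n = k + 1 + d := ⟨n - (k + 1), by omega⟩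
    rw [qbinom_add_left hq, show k + 1 + d = k + (d + 1) by omega, qbinom_add_left hq,
      Nat.add_sub_cancel_left, qPochhammer_succ, qPochhammer_succ]
    have := qPochhammer_ne_zero hq k
    have := qPochhammer_ne_zero hq d
    have := one_sub_pow_ne_zero hq (j := k + 1) (by omega)
    have := one_sub_pow_ne_zero hq (j := d + 1) (by omega)
    field_simp
  · simp [qbinom_of_lt]
  · rw [qbinom_of_lt hk, qbinom_of_lt (by omega), mul_zero, mul_zero]

lemma qbinom_pascal (hq : ¬IsOfFinOrder q) (n k : ℕ) :
    qbinom q (n + 1) (k + 1) = qbinom q n (k + 1) + q ^ (n - k) * qbinom q n k := by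
  by_cases hk : k ≤ n
  · obtain ⟨d, rfl⟩ := Nat.exists_eq_add_of_le hk
    have hx := one_sub_pow_ne_zero hq (j := k + 1) (by omega)
    have hR := one_sub_pow_mul_qbinom_succ_right hq (k + d) k
    rw [Nat.add_sub_cancel_left] at hR ⊢
    rw [qbinom_succ_succ]
    field_simp
    linear_combination -hR
  · rw [qbinom_of_lt (by omega), qbinom_of_lt (by omega), qbinom_of_lt (by omega)]
    ring

lemma qbinom_pascal' (hq : ¬IsOfFinOrder q) (n k : ℕ) :
    qbinom q (n + 1) (k + 1) = q ^ (k + 1) * qbinom q n (k + 1) + qbinom q n k := by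
  linear_combination qbinom_pascal hq n k + one_sub_pow_mul_qbinom_succ_right hq n k

lemma qbinom_div_qnum (hq : ¬IsOfFinOrder q) (n k : ℕ) :
    qbinom q n k / qnum q (k + 1) = qbinom q (n + 1) (k + 1) / qnum q (n + 1) := by
  have := one_sub_pow_ne_zero hq (j := k + 1) (by omega)
  have := one_sub_pow_ne_zero hq (j := n + 1) (by omega)
  have := one_sub_pow_ne_zero hq one_ne_zero
  rw [qbinom_succ_succ, qnum, qnum]
  field_simp

lemma sum_range_alternating_qbinom (hq : ¬IsOfFinOrder q) (n i : ℕ) :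
    ∑ k ∈ range (i + 1), (-1 : ℝ) ^ k * q ^ k.choose 2 * qbinom q (n + 1) k
      = (-1) ^ i * q ^ (i + 1).choose 2 * qbinom q n i := by
  induction i with
  | zero => simp [qbinom_zero_right]
  | succ i ih =>
    rw [sum_range_succ, ih, qbinom_pascal' hq, Nat.choose_succ_succ' (i + 1), Nat.choose_one_right,
      pow_add]
    ring

lemma sum_Icc_alternating_qbinom (hq : ¬IsOfFinOrder q) {n i : ℕ} (hi : i ≤ n) :
    ∑ k ∈ Icc (i + 1) (n + 1), (-1 : ℝ) ^ (k + 1) * q ^ k.choose 2 * qbinom q (n + 1) k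
      = (-1) ^ i * q ^ (i + 1).choose 2 * qbinom q n i := by
  have htotal := sum_range_alternating_qbinom hq n (n + 1)
  rw [qbinom_of_lt (by omega), mul_zero,
    ← sum_range_add_sum_Ico _ (by omega : i + 1 ≤ n + 1 + 1), sum_range_alternating_qbinom hq,
    Ico_add_one_right_eq_Icc] at htotal
  simp only [pow_succ, mul_neg_one, neg_mul, sum_neg_distrib]
  linear_combination -htotal

lemma sum_alternating_qbinom_mul_nestedInvQ (hq : ¬IsOfFinOrder q) (n r : ℕ) :
    ∑ k ∈ Icc 1 (n + 1), (-1 : ℝ) ^ (k + 1) * q ^ k.choose 2 * qbinom q (n + 1) k * nestedInvQ q k r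
      = 1 / qnum q (n + 1) ^ r := by
  induction r with
  | zero => simpa [nestedInvQ, qbinom_zero_right] using sum_Icc_alternating_qbinom hq (Nat.zero_le n)
  | succ r ih =>
    have hinner : ∀ j ∈ Icc 1 (n + 1),
        ∑ k ∈ Icc j (n + 1), (-1 : ℝ) ^ (k + 1) * q ^ k.choose 2 * qbinom q (n + 1) k
            * (1 / qnum q j * nestedInvQ q j r)
          = 1 / qnum q (n + 1) *
            ((-1 : ℝ) ^ (j + 1) * q ^ j.choose 2 * qbinom q (n + 1) j * nestedInvQ q j r) := by
      intro j hj
      obtain ⟨i, rfl⟩ : ∃ i, j = i + 1 := ⟨j - 1, by simp at hj; omega⟩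
      rw [← sum_mul, sum_Icc_alternating_qbinom hq (by simp at hj; omega)]
      linear_combination
        (-1 : ℝ) ^ i * q ^ (i + 1).choose 2 * nestedInvQ q (i + 1) r * qbinom_div_qnum hq n i
    simp only [nestedInvQ, mul_sum]
    rw [sum_comm' (t' := Icc 1 (n + 1)) (s' := fun j => Icc j (n + 1))
      (fun k j => by simp only [mem_Icc]; omega), sum_congr rfl hinner, ← mul_sum, ih]
    ring

noncomputable def qKarlDualSum (q : ℝ) (n p : ℕ) : ℝ :=
  ∑ k ∈ Icc 1 n, (-1 : ℝ) ^ (k + 1) * q ^ (k * (k + 1) / 2) * qbinom q n k *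
    ((1 / qnum q k) * nestedInvQ q k p)

lemma qKarlDualSum_succ (hq : ¬IsOfFinOrder q) (n p : ℕ) :
    qKarlDualSum q (n + 1) p = qKarlDualSum q n p + q ^ (n + 1) / qnum q (n + 1) ^ (p + 1) := by
  have hterm : ∀ k ∈ Icc 1 (n + 1),
      (-1 : ℝ) ^ (k + 1) * q ^ (k * (k + 1) / 2) * qbinom q (n + 1) k *
          ((1 / qnum q k) * nestedInvQ q k p)
        = (-1 : ℝ) ^ (k + 1) * q ^ (k * (k + 1) / 2) * qbinom q n k *
          ((1 / qnum q k) * nestedInvQ q k p)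
          + q ^ (n + 1) / qnum q (n + 1) *
            ((-1 : ℝ) ^ (k + 1) * q ^ k.choose 2 * qbinom q (n + 1) k * nestedInvQ q k p) := by
    intro k hk
    obtain ⟨i, rfl⟩ : ∃ i, k = i + 1 := ⟨k - 1, by simp at hk; omega⟩
    obtain ⟨d, rfl⟩ : ∃ d, n = i + d := ⟨n - i, by simp at hk; omega⟩
    have htri : (i + 1) * (i + 1 + 1) / 2 = (i + 1) + (i + 1).choose 2 := by
      have h := Nat.choose_succ_succ' (i + 1) 1
      rw [Nat.choose_one_right, Nat.choose_two_right, Nat.add_sub_cancel] at h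
      rw [mul_comm, ← h]
    have hpascal := qbinom_pascal hq (i + d) i
    rw [Nat.add_sub_cancel_left] at hpascal
    rw [htri]
    linear_combination (-1 : ℝ) ^ i * q ^ (i + 1) * q ^ (i + 1).choose 2 * nestedInvQ q (i + 1) p *
      (1 / qnum q (i + 1) * hpascal + q ^ d * qbinom_div_qnum hq (i + d) i)
  have hlast : qbinom q n (n + 1) = 0 := qbinom_of_lt (Nat.lt_succ_self n)
  rw [qKarlDualSum, sum_congr rfl hterm, sum_add_distrib, ← mul_sum,
    sum_alternating_qbinom_mul_nestedInvQ hq, sum_Icc_succ_top (by omega), hlast, qKarlDualSum]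
  ring

lemma sum_pow_div_qnum_pow_eq_qKarlDualSum (hq : ¬IsOfFinOrder q) (n p : ℕ) :
    ∑ k ∈ Icc 1 n, q ^ k / qnum q k ^ (p + 1) = qKarlDualSum q n p := by
  induction n with
  | zero => simp [qKarlDualSum]
  | succ n ih => rw [sum_Icc_succ_top (by omega), ih, qKarlDualSum_succ hq]

end

theorem qKarl_dual_general (n m : ℕ) (hm : 0 < m) (q : ℝ) (hq0 : 0 < q) (hq1 : q < 1) :
    ∑ k ∈ Finset.Icc 1 n, q ^ k / (qnum q k) ^ m
    = ∑ k ∈ Finset.Icc 1 n,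
        (-1 : ℝ) ^ (k + 1) * q ^ (k * (k + 1) / 2) * qbinom q n k *
          ((1 / qnum q k) * nestedInvQ q k (m - 1)) := by
  obtain ⟨p, rfl⟩ : ∃ p, m = p + 1 := ⟨m - 1, by omega⟩
  exact sum_pow_div_qnum_pow_eq_qKarlDualSum (fun h => hq1.ne (h.eq_one hq0.le)) n p

theorem qKarl_dual (n m : ℕ) (hn : 0 < n) (hm : 0 < m) (q : ℝ) (hq0 : 0 < q) (hq1 : q < 1) :
    ∑ k ∈ Finset.Icc 1 n, q ^ k / (qnum q k) ^ m
    = ∑ k ∈ Finset.Icc 1 n,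
        (-1 : ℝ) ^ (k + 1) * q ^ (k * (k + 1) / 2) * qbinom q n k *
          ((1 / qnum q k) * nestedInvQ q k (m - 1)) :=
  qKarl_dual_general n m hm q hq0 hq1
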